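/- arXiv:2304.10501 — 3 statements merged into one kernel-verified Lean document; each statement's English description precedes it below -/
import Mathlib

section
/- Let F be a free group, H a finitely generated subgroup, and Su the pseudovariety of finite supersolvable groups. Then H is dense in the pro-Su topology on F if and only if for every prime p and every normal subgroup N of F with F/N isomorphic to (ℤ/pℤ) ⋊ C for some C ≤ Aut(ℤ/pℤ), one has HN = F. -/
/-- A group is supersolvable if it has a chain `⊥ = H_0 ≤ ⋯ ≤ H_k = ⊤` of subgroups,
each normal in the whole group, with all successive factors cyclic. -/
def IsSupersolvableGroup (G : Type*) [Group G] : Prop :=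
  ∃ (k : ℕ) (H : Fin (k + 1) → Subgroup G),
    H 0 = ⊥ ∧ H (Fin.last k) = ⊤ ∧
    (∀ i : Fin (k + 1), (H i).Normal) ∧
    (∀ i : Fin k, ∃ g : G, H i.succ = H i.castSucc ⊔ Subgroup.zpowers g)

def addAutToMulAut (A : Type*) [AddGroup A] : Multiplicative (AddAut A) →* MulAut (Multiplicative A) where
  toFun f := AddEquiv.toMultiplicative (Multiplicative.toAdd f)
  map_one' := rfl
  map_mul' _ _ := rfl

/-- The natural action of `C ≤ Aut(ℤ/pℤ) ≅ (ℤ/pℤ)ˣ` on `ℤ/pℤ`. -/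
def unitAct (p : ℕ) : (ZMod p)ˣ →* MulAut (Multiplicative (ZMod p)) :=
  (addAutToMulAut _).comp (DistribMulAction.toAddAut (ZMod p)ˣ (ZMod p))

/-! Only one direction has content. Let `G = F/N` be a finite supersolvable quotient of minimal
order in which the image `K` of `H` is proper. Then `K` supplements every nontrivial normal
subgroup of `G`, since the corresponding smaller quotients are covered by `H`. A supersolvable
group has a normal subgroup `B` of prime order `p`. The subgroup `K ⊓ C_G(B)` is normalized by
`K` and centralized by `B`, hence normal in `G = K B`; being contained in `K` it is trivial. So
`K` is a complement of `B` acting faithfully on it, and `G ≅ B ⋊ K ≅ ℤ/p ⋊ C` with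
`C ≤ Aut(ℤ/p) = (ℤ/p)ˣ`. Conversely `ℤ/p ⋊ C` is supersolvable because `C` is cyclic. -/

open Subgroup

section

variable {G : Type*} [Group G]

theorem IsSupersolvableGroup.of_surjective {G' : Type*} [Group G'] (f : G →* G')
    (hf : Function.Surjective f) (h : IsSupersolvableGroup G) : IsSupersolvableGroup G' := by
  obtain ⟨k, H, h0, htop, hnormal, hstep⟩ := h
  refine ⟨k, fun i => (H i).map f, by simp [h0], by simp [htop, map_top_of_surjective f hf],
    fun i => (hnormal i).map f hf, fun i => ?_⟩
  obtain ⟨g, hg⟩ := hstep i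
  exact ⟨f g, by dsimp only; rw [hg, Subgroup.map_sup, MonoidHom.map_zpowers]⟩

theorem IsSupersolvableGroup.of_mulEquiv {G' : Type*} [Group G'] (e : G ≃* G')
    (h : IsSupersolvableGroup G) : IsSupersolvableGroup G' :=
  h.of_surjective e.toMonoidHom e.surjective

theorem IsSupersolvableGroup.of_isCyclic_ker {Q : Type*} [Group Q] [IsCyclic Q] (f : G →* Q)
    (hf : Function.Surjective f) [IsCyclic f.ker] : IsSupersolvableGroup G := by
  obtain ⟨n, hn⟩ := IsCyclic.exists_generator (α := f.ker)
  obtain ⟨q, hq⟩ := IsCyclic.exists_generator (α := Q)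
  obtain ⟨g, rfl⟩ := hf q
  refine ⟨2, ![⊥, f.ker, ⊤], rfl, rfl, fun i => by fin_cases i <;> dsimp <;> infer_instance,
    fun i => ?_⟩
  fin_cases i
  · refine ⟨n, ?_⟩
    show f.ker = ⊥ ⊔ zpowers (n : G)
    rw [bot_sup_eq, show (n : G) = f.ker.subtype n from rfl, ← MonoidHom.map_zpowers,
      (eq_top_iff' _).mpr hn, ← MonoidHom.range_eq_map, range_subtype]
  · refine ⟨g, ?_⟩
    show ⊤ = f.ker ⊔ zpowers g
    refine ((eq_top_iff' _).mpr fun x => ?_).symm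
    obtain ⟨k, hk⟩ := mem_zpowers_iff.mp (hq (f x))
    have hx : x * g ^ (-k) ∈ f.ker := by simp [hk]
    simpa using mul_mem (mem_sup_left hx) (mem_sup_right (zpow_mem (mem_zpowers g) k))

theorem IsSupersolvableGroup.semidirectProduct {N K : Type*} [Group N] [Group K] [IsCyclic N]
    [IsCyclic K] (φ : K →* MulAut N) : IsSupersolvableGroup (N ⋊[φ] K) := by
  have : IsCyclic (SemidirectProduct.rightHom : N ⋊[φ] K →* K).ker := by
    rw [← SemidirectProduct.range_inl_eq_ker_rightHom]
    exact isCyclic_of_surjective _ SemidirectProduct.inl.rangeRestrict_surjective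
  exact .of_isCyclic_ker _ SemidirectProduct.rightHom_surjective

theorem IsSupersolvableGroup.exists_ne_one_normal_zpowers [Nontrivial G]
    (h : IsSupersolvableGroup G) : ∃ g : G, g ≠ 1 ∧ (zpowers g).Normal := by
  obtain ⟨k, H, h0, htop, hnormal, hstep⟩ := h
  suffices ∀ i, H i ≠ ⊥ → ∃ g : G, g ≠ 1 ∧ (zpowers g).Normal from
    this (Fin.last k) (htop ▸ top_ne_bot)
  intro i
  induction i using Fin.induction with
  | zero => exact fun hne => absurd h0 hne
  | succ i ih =>
    intro hne
    by_cases hi : H i.castSucc = ⊥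
    · obtain ⟨g, hg⟩ := hstep i
      rw [hi, bot_sup_eq] at hg
      refine ⟨g, ?_, hg ▸ hnormal i.succ⟩
      rintro rfl
      exact hne (hg.trans zpowers_one_eq_bot)
    · exact ih hi

theorem Subgroup.Normal.zpowers_pow {g : G} (h : (zpowers g).Normal) (n : ℕ) :
    (zpowers (g ^ n)).Normal := by
  refine ⟨fun x hx c => ?_⟩
  obtain ⟨m, rfl⟩ := mem_zpowers_iff.mp hx
  obtain ⟨t, ht⟩ := mem_zpowers_iff.mp (h.conj_mem g (mem_zpowers g) c)
  refine mem_zpowers_iff.mpr ⟨t * m, ?_⟩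
  rw [← conj_zpow, ← conj_pow, ← ht]
  group

theorem IsSupersolvableGroup.exists_prime_orderOf_normal_zpowers [Finite G] [Nontrivial G]
    (h : IsSupersolvableGroup G) :
    ∃ p : ℕ, p.Prime ∧ ∃ b : G, orderOf b = p ∧ (zpowers b).Normal := by
  obtain ⟨g, hg, hnormal⟩ := h.exists_ne_one_normal_zpowers
  have hg' : orderOf g ≠ 1 := by rwa [Ne, orderOf_eq_one_iff]
  exact ⟨_, Nat.minFac_prime hg', _, orderOf_pow_orderOf_div (orderOf_pos g).ne'
    (Nat.minFac_dvd _), hnormal.zpowers_pow _⟩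

theorem Subgroup.normal_inf_centralizer_of_sup_eq_top {K B : Subgroup G} [B.Normal]
    (hKB : K ⊔ B = ⊤) : (K ⊓ centralizer B).Normal := by
  rw [← normalizer_eq_top_iff, eq_top_iff, ← hKB, sup_le_iff]
  constructor
  · exact (le_inf K.le_normalizer (le_normalizer_of_normal (H := centralizer B))).trans
      inf_normalizer_le_normalizer_inf
  · exact (le_centralizer_iff.mp inf_le_right).trans (centralizer_le_normalizer _)

theorem Subgroup.injective_normalizerMonoidHom_comp_inclusion {K B : Subgroup G}
    (h : K ≤ normalizer B) (hK : K ⊓ centralizer B = ⊥) :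
    Function.Injective (B.normalizerMonoidHom.comp (inclusion h)) := by
  rw [injective_iff_map_eq_one]
  intro k hk
  have hk' : inclusion h k ∈ B.normalizerMonoidHom.ker := hk
  rw [normalizerMonoidHom_ker, mem_subgroupOf] at hk'
  have : (k : G) ∈ K ⊓ centralizer B := ⟨k.2, hk'⟩
  rw [hK, mem_bot] at this
  exact Subtype.ext this

theorem SemidirectProduct.exists_mulEquiv_subgroup_of_injective {N K N' A : Type*} [Group N]
    [Group K] [Group N'] [Group A] {φ : K →* MulAut N} (hφ : Function.Injective φ)
    (e : N ≃* N') {α : A →* MulAut N'} (hα : Function.Bijective α) :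
    ∃ C : Subgroup A, Nonempty (N ⋊[φ] K ≃* N' ⋊[α.comp C.subtype] C) := by
  let β : K →* A :=
    (MulEquiv.ofBijective α hα).symm.toMonoidHom.comp ((MulAut.congr e).toMonoidHom.comp φ)
  have hβ : Function.Injective β :=
    fun x y h => hφ ((MulAut.congr e).injective ((MulEquiv.ofBijective α hα).symm.injective h))
  refine ⟨β.range, ⟨SemidirectProduct.congr e (MonoidHom.ofInjective hβ) fun k => ?_⟩⟩
  ext n
  have : α (β k) = MulAut.congr e (φ k) := MulEquiv.ofBijective_apply_symm_apply α hα
  simp [MonoidHom.ofInjective_apply, this]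

theorem unitAct_bijective (n : ℕ) : Function.Bijective (unitAct n) := by
  have h : ⇑(unitAct n) =
      AddEquiv.toMultiplicative ∘ (ZMod.AddAutEquivUnits n).symm ∘ Additive.ofMul := by
    funext u; ext x; rfl
  rw [h]
  exact AddEquiv.toMultiplicative.bijective.comp
    ((ZMod.AddAutEquivUnits n).symm.bijective.comp Additive.ofMul.bijective)

theorem IsSupersolvableGroup.exists_mulEquiv_semidirectProduct_of_sup_eq_top [Finite G]
    (hG : IsSupersolvableGroup G) {K : Subgroup G} (hK : K ≠ ⊤)
    (hsup : ∀ M : Subgroup G, M.Normal → M ≠ ⊥ → K ⊔ M = ⊤) :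
    ∃ p : ℕ, p.Prime ∧ ∃ C : Subgroup (ZMod p)ˣ,
      Nonempty (G ≃* Multiplicative (ZMod p) ⋊[(unitAct p).comp C.subtype] C) := by
  have hcore : ∀ M : Subgroup G, M.Normal → M ≤ K → M = ⊥ := fun M hM hMK =>
    by_contra fun hne => hK (by simpa [sup_eq_left.mpr hMK] using hsup M hM hne)
  have : Nontrivial G := by
    by_contra h
    rw [not_nontrivial_iff_subsingleton] at h
    exact hK (Subsingleton.elim _ _)
  obtain ⟨p, hp, b, hb, hnormal⟩ := hG.exists_prime_orderOf_normal_zpowers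
  have hB : zpowers b ≠ ⊥ := by
    rw [Ne, zpowers_eq_bot]
    rintro rfl
    exact hp.ne_one (hb ▸ orderOf_one)
  have hcent : K ⊓ centralizer (zpowers b) = ⊥ :=
    hcore _ (normal_inf_centralizer_of_sup_eq_top (hsup _ hnormal hB)) inf_le_left
  have hcompl : (zpowers b).IsComplement' K := by
    refine isComplement'_of_disjoint_and_mul_eq_univ ?_ ?_
    · rw [disjoint_iff, inf_comm, eq_bot_iff, ← hcent]
      exact inf_le_inf_left K (le_centralizer_iff_isMulCommutative.mpr inferInstance)
    · rw [← normal_mul, sup_comm, hsup _ hnormal hB, coe_top]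
  have hcard : Nat.card (zpowers b) = p := by rw [Nat.card_zpowers, hb]
  let e : zpowers b ≃* Multiplicative (ZMod p) :=
    (hcard ▸ zmodCyclicMulEquiv inferInstance).symm
  obtain ⟨C, ⟨f⟩⟩ := SemidirectProduct.exists_mulEquiv_subgroup_of_injective
    (injective_normalizerMonoidHom_comp_inclusion _ hcent) e (unitAct_bijective p)
  exact ⟨p, hp, C, ⟨(SemidirectProduct.mulEquivSubgroup hcompl).symm.trans f⟩⟩

end

open QuotientGroup in
theorem QuotientGroup.map_mk'_eq_top_iff {F : Type*} [Group F] (H N : Subgroup F) [N.Normal] :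
    H.map (mk' N) = ⊤ ↔ H ⊔ N = ⊤ := by
  rw [← (comap_injective (mk'_surjective N)).eq_iff, comap_map_eq, ker_mk', comap_top]

open QuotientGroup in
theorem Subgroup.sup_eq_top_of_isSupersolvableGroup {F : Type*} [Group F] (H : Subgroup F)
    (hH : ∀ p : ℕ, p.Prime → ∀ (N : Subgroup F) [N.Normal], (∃ C : Subgroup (ZMod p)ˣ,
      Nonempty (F ⧸ N ≃* Multiplicative (ZMod p) ⋊[(unitAct p).comp C.subtype] C)) →
      H ⊔ N = ⊤)
    (N : Subgroup F) [N.Normal] [Finite (F ⧸ N)] (hN : IsSupersolvableGroup (F ⧸ N)) :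
    H ⊔ N = ⊤ := by
  induction hn : N.index using Nat.strong_induction_on generalizing N with
  | _ n ih =>
  by_contra hHN
  suffices hsup : ∀ M : Subgroup (F ⧸ N), M.Normal → M ≠ ⊥ →
      H.map (mk' N) ⊔ M = ⊤ by
    obtain ⟨p, hp, C, he⟩ := hN.exists_mulEquiv_semidirectProduct_of_sup_eq_top
      (mt (map_mk'_eq_top_iff H N).mp hHN) hsup
    exact hHN (hH p hp N ⟨C, he⟩)
  intro M hM hM0
  have hlt : N < M.comap (mk' N) := by
    have hbot : (⊥ : Subgroup (F ⧸ N)).comap (mk' N) = N := by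
      rw [MonoidHom.comap_bot, ker_mk']
    exact hbot.symm.trans_lt <|
      (comap_lt_comap_of_surjective (mk'_surjective N)).mpr (bot_lt_iff_ne_bot.mpr hM0)
  let f : F ⧸ N →* F ⧸ M.comap (mk' N) := QuotientGroup.map N _ (MonoidHom.id F) hlt.le
  have hf : Function.Surjective f :=
    map_surjective_of_surjective N (M.comap (mk' N)) (MonoidHom.id F) mk_surjective
      hlt.le
  have : Finite (F ⧸ M.comap (mk' N)) := Finite.of_surjective f hf
  have : N.FiniteIndex := finiteIndex_of_finite_quotient
  have hHM := congrArg (map (mk' N))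
    (ih _ (hn ▸ index_strictAnti hlt) _ (hN.of_surjective f hf) rfl)
  rwa [Subgroup.map_sup, map_comap_eq_self_of_surjective (mk'_surjective N),
    map_top_of_surjective _ (mk'_surjective N)] at hHM

theorem stmt7_general {ι : Type*} (H : Subgroup (FreeGroup ι)) :
    (∀ (N : Subgroup (FreeGroup ι)) [N.Normal],
        Finite (FreeGroup ι ⧸ N) → IsSupersolvableGroup (FreeGroup ι ⧸ N) → H ⊔ N = ⊤) ↔
      (∀ (p : ℕ), p.Prime → ∀ (N : Subgroup (FreeGroup ι)) [N.Normal],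
        (∃ C : Subgroup (ZMod p)ˣ,
          Nonempty ((FreeGroup ι ⧸ N) ≃*
            Multiplicative (ZMod p) ⋊[(unitAct p).comp C.subtype] C)) →
        H ⊔ N = ⊤) := by
  refine ⟨fun hH p hp N _ ⟨C, ⟨e⟩⟩ => ?_,
    fun hH N _ _ => H.sup_eq_top_of_isSupersolvableGroup hH N⟩
  have : Fact p.Prime := ⟨hp⟩
  exact hH N (Finite.of_equiv _ (SemidirectProduct.equivProd.symm.trans e.symm.toEquiv))
    ((IsSupersolvableGroup.semidirectProduct _).of_mulEquiv e.symm)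

/-- A finitely generated subgroup `H` of a free group `F` is dense in the
pro-(supersolvable) topology iff `HN = F` for every normal `N` of `F` with
`F/N ≅ (ℤ/pℤ) ⋊ C`, `p` prime, `C ≤ Aut(ℤ/pℤ)`. -/
theorem stmt7 {ι : Type*} (H : Subgroup (FreeGroup ι)) (hH : H.FG) :
    (∀ (N : Subgroup (FreeGroup ι)) [N.Normal],
        Finite (FreeGroup ι ⧸ N) → IsSupersolvableGroup (FreeGroup ι ⧸ N) → H ⊔ N = ⊤) ↔
      (∀ (p : ℕ), p.Prime → ∀ (N : Subgroup (FreeGroup ι)) [N.Normal],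
        (∃ C : Subgroup (ZMod p)ˣ,
          Nonempty ((FreeGroup ι ⧸ N) ≃*
            Multiplicative (ZMod p) ⋊[(unitAct p).comp C.subtype] C)) →
        H ⊔ N = ⊤) :=
  stmt7_general H
end

section
/- Fix a prime p and an integer d ≥ 2. Let G = V_{d-1} ⋊_α C be a p-hypersolvable group with C nontrivial of order c. Write each g ∈ G uniquely as g = v(g) x^{c(g)} with v(g) ∈ V_{d-1} and 0 ≤ c(g) ≤ c−1. A subset Z = {g_1,...,g_d} of cardinality d generates G if and only if: (i) lcm{ c / gcd(c, c(g_i)) : c(g_i) ≠ 0 } = c, and (ii) the commutators [g_i, g_j] for g_i, g_j ∈ Z span V_{d-1} as a ℤ/pℤ-vector space. -/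
/-- The diagonal (scalar) action of `(ℤ/pℤ)ˣ` on `(ℤ/pℤ)^n`. -/
def diagAct (p n : ℕ) : (ZMod p)ˣ →* MulAut (Multiplicative (Fin n → ZMod p)) :=
  (addAutToMulAut _).comp (DistribMulAction.toAddAut (ZMod p)ˣ (Fin n → ZMod p))

/-- The `p`-hypersolvable group `V_n ⋊_α C` where `C ≤ (ℤ/pℤ)ˣ` acts diagonally. -/
abbrev Hyp (p n : ℕ) (C : Subgroup (ZMod p)ˣ) :=
  Multiplicative (Fin n → ZMod p) ⋊[(diagAct p n).comp C.subtype] C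

open scoped commutatorElement

namespace Subgroup

variable {G : Type*} [Group G]

theorem commutatorElement_mem_of_closure_eq_top {S : Set G} (hS : closure S = ⊤)
    {N : Subgroup G} [N.Normal] (hN : ∀ x ∈ S, ∀ y ∈ S, ⁅x, y⁆ ∈ N) (a b : G) : ⁅a, b⁆ ∈ N := by
  let q := QuotientGroup.mk' N
  have hq : closure (q '' S) = ⊤ := by
    rw [← MonoidHom.map_closure, hS, map_top_of_surjective q (QuotientGroup.mk'_surjective N)]
  have hcomm : IsMulCommutative (closure (q '' S)) := by
    refine isMulCommutative_closure ?_
    rintro _ ⟨x, hx, rfl⟩ _ ⟨y, hy, rfl⟩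
    rw [← commutatorElement_eq_one_iff_mul_comm, ← map_commutatorElement]
    exact (QuotientGroup.eq_one_iff _).2 (hN x hx y hy)
  have hab : q a * q b = q b * q a := by
    have := hcomm.is_comm.comm ⟨q a, hq ▸ mem_top _⟩ ⟨q b, hq ▸ mem_top _⟩
    simpa using congrArg Subtype.val this
  rw [← QuotientGroup.eq_one_iff, ← QuotientGroup.mk'_apply, map_commutatorElement,
    commutatorElement_eq_one_iff_mul_comm]
  exact hab

end Subgroup

theorem closure_range_pow_eq_zpowers_iff {M ι : Type*} [CommGroup M] [Finite M] [Fintype ι]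
    (a : M) (k : ι → ℕ) :
    Subgroup.closure (Set.range fun i => a ^ k i) = Subgroup.zpowers a ↔
      (Finset.univ.filter fun i => k i ≠ 0).lcm (fun i => orderOf a / (orderOf a).gcd (k i)) =
        orderOf a := by
  set L := (Finset.univ.filter fun i => k i ≠ 0).lcm fun i => orderOf a / (orderOf a).gcd (k i)
  have hdvd : L ∣ orderOf a := Finset.lcm_dvd fun i _ => Nat.div_dvd_of_dvd (Nat.gcd_dvd_left _ _)
  have hle : Subgroup.closure (Set.range fun i => a ^ k i) ≤ Subgroup.zpowers a :=
    (Subgroup.closure_le _).2 <| Set.range_subset_iff.2 fun i => pow_mem (Subgroup.mem_zpowers a) _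
  constructor
  · intro h
    have hker : Subgroup.closure (Set.range fun i => a ^ k i) ≤ (powMonoidHom L).ker := by
      refine (Subgroup.closure_le _).2 <| Set.range_subset_iff.2 fun i => ?_
      by_cases hki : k i = 0
      · simp [hki]
      · rw [SetLike.mem_coe, MonoidHom.mem_ker, powMonoidHom_apply, ← orderOf_dvd_iff_pow_eq_one,
          orderOf_pow]
        exact Finset.dvd_lcm (by simpa using hki)
    have haL : a ^ L = 1 := hker (h ▸ Subgroup.mem_zpowers a)
    exact Nat.dvd_antisymm hdvd (orderOf_dvd_of_pow_eq_one haL)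
  · intro hL
    refine Subgroup.eq_of_le_of_card_ge hle ?_
    rw [Nat.card_zpowers, ← hL]
    refine Nat.le_of_dvd Nat.card_pos (Finset.lcm_dvd fun i _ => ?_)
    have := orderOf_dvd_natCard (⟨a ^ k i, Subgroup.subset_closure ⟨i, rfl⟩⟩ :
      Subgroup.closure (Set.range fun i => a ^ k i))
    rwa [Subgroup.orderOf_mk, orderOf_pow] at this

namespace SemidirectProduct

variable {N G : Type*} [Group N]

section

variable [Group G] {φ : G →* MulAut N}

theorem eq_top_of_range_inl_le {H : Subgroup (N ⋊[φ] G)} (hinl : (inl : N →* N ⋊[φ] G).range ≤ H)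
    (hright : H.map rightHom = ⊤) : H = ⊤ := by
  refine (Subgroup.eq_top_iff' H).2 fun x => ?_
  obtain ⟨y, hy, hyx⟩ := (Subgroup.mem_map).1 (hright ▸ Subgroup.mem_top x.right)
  have hinr : inr x.right = (inl y.left)⁻¹ * y := by
    rw [← hyx, rightHom_eq_right, eq_inv_mul_iff_mul_eq, inl_left_mul_inr_right]
  rw [← inl_left_mul_inr_right x, hinr]
  exact mul_mem (hinl ⟨_, rfl⟩) (mul_mem (inv_mem (hinl ⟨_, rfl⟩)) hy)

theorem normal_map_inl {A : Subgroup N} [hAn : A.Normal] (hA : ∀ g, ∀ n ∈ A, φ g n ∈ A) :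
    (A.map (inl : N →* N ⋊[φ] G)).Normal := by
  constructor
  rintro _ ⟨a, ha, rfl⟩ ⟨n, g⟩
  refine ⟨n * φ g a * n⁻¹, hAn.conj_mem _ (hA _ _ ha) _, ?_⟩
  simp [mk_eq_inl_mul_inr, inl_aut, mul_assoc]

end

theorem commutatorElement_eq_inl [CommGroup G] {φ : G →* MulAut N} (x y : N ⋊[φ] G) :
    ⁅x, y⁆ = inl ⁅x, y⁆.left := by
  ext
  · rfl
  · exact commutatorElement_eq_one_iff_mul_comm.2 (mul_comm x.right y.right)

end SemidirectProduct

namespace Hyp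

open SemidirectProduct

variable {p n : ℕ} {C : Subgroup (ZMod p)ˣ}

def commutatorVectors {ι : Type*} (g : ι → Hyp p n C) : Set (Fin n → ZMod p) :=
  {w | ∃ i j, g i * g j * (g i)⁻¹ * (g j)⁻¹ = ⟨Multiplicative.ofAdd w, 1⟩}

theorem commutatorElement_inl_inr (w : Fin n → ZMod p) (u : C) :
    ⁅(inl (Multiplicative.ofAdd w) : Hyp p n C), (inr u : Hyp p n C)⁆ =
      inl (Multiplicative.ofAdd (w - (u : (ZMod p)ˣ) • w)) := by
  rw [commutatorElement_def, mul_assoc, mul_assoc, ← mul_assoc (inr u), ← map_inv inl,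
    ← map_inv inr, ← inl_aut, ← map_mul]
  congr 1
  show Multiplicative.ofAdd (w + (u : (ZMod p)ˣ) • -w) = _
  rw [smul_neg, ← sub_eq_add_neg]

theorem range_inl_le_closure_of_span_eq_top {ι : Type*} (g : ι → Hyp p n C)
    (h : Submodule.span (ZMod p) (commutatorVectors g) = ⊤) :
    (inl : _ →* Hyp p n C).range ≤ Subgroup.closure (Set.range g) := by
  set H := Subgroup.closure (Set.range g)
  let B : Submodule (ZMod p) (Fin n → ZMod p) :=
    AddSubgroup.toZModSubmodule p (Subgroup.toAddSubgroup' (H.comap inl))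
  have hB : Submodule.span (ZMod p) (commutatorVectors g) ≤ B := by
    rw [Submodule.span_le]
    rintro w ⟨i, j, hij⟩
    change inl (Multiplicative.ofAdd w) ∈ H
    rw [show inl (Multiplicative.ofAdd w) = (⟨Multiplicative.ofAdd w, 1⟩ : Hyp p n C) from rfl,
      ← hij]
    have hgi := Subgroup.subset_closure (Set.mem_range_self (f := g) i)
    have hgj := Subgroup.subset_closure (Set.mem_range_self (f := g) j)
    exact mul_mem (mul_mem (mul_mem hgi hgj) (inv_mem hgi)) (inv_mem hgj)
  rintro _ ⟨m, rfl⟩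
  exact (h ▸ hB) (Submodule.mem_top (x := Multiplicative.toAdd m))

theorem span_commutatorVectors_eq_top_of_closure_eq_top [Fact p.Prime] {ι : Type*}
    (g : ι → Hyp p n C) (hg : Subgroup.closure (Set.range g) = ⊤) {u : C} (hu : u ≠ 1) :
    Submodule.span (ZMod p) (commutatorVectors g) = ⊤ := by
  set W := Submodule.span (ZMod p) (commutatorVectors g)
  let A : Subgroup (Multiplicative (Fin n → ZMod p)) :=
    Subgroup.toAddSubgroup'.symm W.toAddSubgroup
  have hA : (A.map (inl : _ →* Hyp p n C)).Normal :=
    normal_map_inl fun v a ha => by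
      show ((v : (ZMod p)ˣ) : ZMod p) • Multiplicative.toAdd a ∈ W
      exact W.smul_mem _ ha
  have hcomm : ∀ x ∈ Set.range g, ∀ y ∈ Set.range g, ⁅x, y⁆ ∈ A.map inl := by
    rintro _ ⟨i, rfl⟩ _ ⟨j, rfl⟩
    rw [commutatorElement_eq_inl]
    exact Subgroup.mem_map_of_mem _ (show Multiplicative.toAdd ⁅g i, g j⁆.left ∈ W from
      Submodule.subset_span ⟨i, j, commutatorElement_eq_inl _ _⟩)
  refine eq_top_iff.2 fun w _ => ?_
  have hmem := Subgroup.commutatorElement_mem_of_closure_eq_top hg hcomm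
    (inl (Multiplicative.ofAdd w)) (inr u)
  rw [commutatorElement_inl_inr, Subgroup.mem_map_iff_mem inl_injective] at hmem
  have hne : (1 : ZMod p) - ((u : (ZMod p)ˣ) : ZMod p) ≠ 0 := by
    rw [sub_ne_zero, ne_comm, Ne, Units.val_eq_one, OneMemClass.coe_eq_one]
    exact hu
  rw [← Submodule.smul_mem_iff W hne, sub_smul, one_smul]
  exact hmem

end Hyp

theorem stmt13_general (p d : ℕ) (hp : p.Prime) (α : (ZMod p)ˣ) (c : ℕ)
    (hc : orderOf α = c) (hα : α ≠ 1)
    (v : Fin d → (Fin (d - 1) → ZMod p)) (k : Fin d → ℕ)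
    (g : Fin d → Hyp p (d - 1) (Subgroup.zpowers α))
    (hg : ∀ i, g i = ⟨Multiplicative.ofAdd (v i), ⟨α, Subgroup.mem_zpowers α⟩ ^ (k i)⟩) :
    Subgroup.closure (Set.range g) = ⊤ ↔
      ((Finset.univ.filter fun i => k i ≠ 0).lcm (fun i => c / Nat.gcd c (k i)) = c ∧
        Submodule.span (ZMod p)
          {w : Fin (d - 1) → ZMod p | ∃ i j,
            g i * g j * (g i)⁻¹ * (g j)⁻¹ = ⟨Multiplicative.ofAdd w, 1⟩} = ⊤) := by
  have : Fact p.Prime := ⟨hp⟩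
  set b : Subgroup.zpowers α := ⟨α, Subgroup.mem_zpowers α⟩
  have hb : orderOf b = c := (Subgroup.orderOf_mk α _).trans hc
  have hbtop : Subgroup.zpowers b = ⊤ := Subgroup.eq_top_of_card_eq _ <| by
    rw [Nat.card_zpowers, Subgroup.orderOf_mk, Nat.card_zpowers]
  have hright : (Subgroup.closure (Set.range g)).map SemidirectProduct.rightHom =
      Subgroup.closure (Set.range fun i => b ^ k i) := by
    rw [MonoidHom.map_closure, ← Set.range_comp]
    congr 2
    funext i
    rw [Function.comp_apply, hg i]
    rfl
  have hlcm := closure_range_pow_eq_zpowers_iff b k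
  rw [hbtop, hb] at hlcm
  constructor
  · intro h
    refine ⟨hlcm.1 ?_, Hyp.span_commutatorVectors_eq_top_of_closure_eq_top g h (u := b) ?_⟩
    · rw [← hright, h, Subgroup.map_top_of_surjective _ SemidirectProduct.rightHom_surjective]
    · exact fun hb1 => hα (congrArg Subtype.val hb1)
  · rintro ⟨hlcm_eq, hspan⟩
    exact SemidirectProduct.eq_top_of_range_inl_le
      (Hyp.range_inl_le_closure_of_span_eq_top g hspan) (hright.trans (hlcm.2 hlcm_eq))

/-- Generation criterion for a `d`-element subset `{g₁,…,g_d}` of `G = V_{d-1} ⋊_α C`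
with `C = ⟨α⟩` nontrivial of order `c`, where `gᵢ = vᵢ x^{kᵢ}` with `0 ≤ kᵢ ≤ c-1`:
the set generates `G` iff (i) `lcm { c / gcd(c,kᵢ) : kᵢ ≠ 0 } = c`, and
(ii) the commutators `[gᵢ,gⱼ]` span `V_{d-1}` over `ℤ/pℤ`. -/
theorem stmt13 (p d : ℕ) (hp : p.Prime) (hd : 2 ≤ d) (α : (ZMod p)ˣ) (c : ℕ)
    (hc : orderOf α = c) (hα : α ≠ 1)
    (v : Fin d → (Fin (d - 1) → ZMod p)) (k : Fin d → ℕ) (hk : ∀ i, k i ≤ c - 1)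
    (g : Fin d → Hyp p (d - 1) (Subgroup.zpowers α))
    (hg : ∀ i, g i = ⟨Multiplicative.ofAdd (v i), ⟨α, Subgroup.mem_zpowers α⟩ ^ (k i)⟩)
    (hinj : Function.Injective g) :
    Subgroup.closure (Set.range g) = ⊤ ↔
      ((Finset.univ.filter fun i => k i ≠ 0).lcm (fun i => c / Nat.gcd c (k i)) = c ∧
        Submodule.span (ZMod p)
          {w : Fin (d - 1) → ZMod p | ∃ i j,
            g i * g j * (g i)⁻¹ * (g j)⁻¹ = ⟨Multiplicative.ofAdd w, 1⟩} = ⊤) :=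
  stmt13_general p d hp α c hc hα v k g hg
end

section
/- Fix a prime p and a p-hypersolvable group G = V_n ⋊_α C with C ≠ 1. Then the minimal number of generators of G is d(G) = n + 1. (If C = 1, then d(G) = n.) -/
open SemidirectProduct

theorem Subgroup.closure_range_ofAdd_eq_top_of_span_zmod_eq_top {m : ℕ} {M ι : Type*}
    [AddCommGroup M] [Module (ZMod m) M] {f : ι → M}
    (hf : Submodule.span (ZMod m) (Set.range f) = ⊤) :
    Subgroup.closure (Set.range fun i => Multiplicative.ofAdd (f i)) = ⊤ := by
  have hclosure : AddSubgroup.closure (Set.range f) = ⊤ := by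
    rw [← Submodule.span_int_eq_addSubgroupClosure,
      ← Submodule.restrictScalars_span ℤ (ZMod m) ZMod.intCast_surjective, hf]
    rfl
  change Subgroup.closure (Multiplicative.toAdd ⁻¹' Set.range f) = ⊤
  rw [← AddSubgroup.toSubgroup_closure, hclosure, map_top]

theorem Subgroup.closure_singleton_mk_self_eq_top {G : Type*} [Group G] (g : G) :
    Subgroup.closure {(⟨g, Subgroup.mem_zpowers g⟩ : Subgroup.zpowers g)} = ⊤ := by
  rw [← Subgroup.zpowers_eq_closure, eq_top_iff]
  rintro ⟨_, k, rfl⟩ -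
  exact ⟨k, rfl⟩

namespace SemidirectProduct

variable {N H : Type*} [Group N] [Group H] {φ : H →* MulAut N}

theorem closure_image_inl_union_image_inr_eq_top {T : Set N} {U : Set H}
    (hT : Subgroup.closure T = ⊤) (hU : Subgroup.closure U = ⊤) :
    Subgroup.closure ((inl '' T ∪ inr '' U : Set (N ⋊[φ] H))) = ⊤ := by
  rw [eq_top_iff]
  rintro x -
  rw [← inl_left_mul_inr_right x]
  refine mul_mem ?_ ?_
  · have hx : inl x.left ∈ (Subgroup.closure T).map (inl : N →* N ⋊[φ] H) :=
      Subgroup.mem_map_of_mem _ (hT ▸ Subgroup.mem_top _)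
    rw [MonoidHom.map_closure] at hx
    exact Subgroup.closure_mono Set.subset_union_left hx
  · have hx : inr x.right ∈ (Subgroup.closure U).map (inr : H →* N ⋊[φ] H) :=
      Subgroup.mem_map_of_mem _ (hU ▸ Subgroup.mem_top _)
    rw [MonoidHom.map_closure] at hx
    exact Subgroup.closure_mono Set.subset_union_right hx

theorem exists_mem_right_ne_one_of_closure_eq_top [Nontrivial H] {S : Set (N ⋊[φ] H)}
    (hS : Subgroup.closure S = ⊤) : ∃ s ∈ S, s.right ≠ 1 := by
  by_contra! hS1
  have hker : (rightHom : N ⋊[φ] H →* H).ker = ⊤ :=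
    eq_top_iff.2 (hS ▸ (Subgroup.closure_le _).2 hS1)
  obtain ⟨h, hh⟩ := exists_ne (1 : H)
  obtain ⟨x, rfl⟩ := rightHom_surjective (φ := φ) h
  exact hh ((MonoidHom.mem_ker).1 (hker ▸ Subgroup.mem_top x))

end SemidirectProduct

section

variable (K V : Type*) [Field K] [AddCommGroup V] [Module K V]

-- `Hyp p n C` unfolds to `ScalarSemidirectProduct (ZMod p) (Fin n → ZMod p) C`.
def scalarAct : Kˣ →* MulAut (Multiplicative V) :=
  (addAutToMulAut V).comp (DistribMulAction.toAddAut Kˣ V)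

abbrev ScalarSemidirectProduct (C : Subgroup Kˣ) :=
  Multiplicative V ⋊[(scalarAct K V).comp C.subtype] C

variable {K V}

@[simp]
theorem toAdd_scalarAct_apply (c : Kˣ) (v : Multiplicative V) :
    (scalarAct K V c v).toAdd = (c : K) • v.toAdd := rfl

variable {C : Subgroup Kˣ}

namespace ScalarSemidirectProduct

theorem toAdd_left_mem_span_of_mem_closure {S : Set (ScalarSemidirectProduct K V C)}
    {g : ScalarSemidirectProduct K V C} (hg : g ∈ Subgroup.closure S) :
    g.left.toAdd ∈ Submodule.span K ((fun s => s.left.toAdd) '' S) := by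
  induction hg using Subgroup.closure_induction with
  | mem s hs => exact Submodule.subset_span ⟨s, hs, rfl⟩
  | one => exact zero_mem _
  | mul a b _ _ ha hb =>
    rw [mul_left, toAdd_mul, MonoidHom.comp_apply, toAdd_scalarAct_apply]
    exact add_mem ha (Submodule.smul_mem _ _ hb)
  | inv a _ ha =>
    rw [inv_left, MonoidHom.comp_apply, toAdd_scalarAct_apply, toAdd_inv]
    exact Submodule.smul_mem _ _ (neg_mem ha)

theorem span_toAdd_left_eq_top_of_closure_eq_top {S : Set (ScalarSemidirectProduct K V C)}
    (hS : Subgroup.closure S = ⊤) :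
    Submodule.span K ((fun s => s.left.toAdd) '' S) = ⊤ :=
  eq_top_iff.2 fun v _ =>
    toAdd_left_mem_span_of_mem_closure (g := inl (Multiplicative.ofAdd v))
      (hS ▸ Subgroup.mem_top _)

theorem toAdd_left_conj_inl (u : V) (g : ScalarSemidirectProduct K V C) :
    (MulAut.conj (inl (Multiplicative.ofAdd u)) g).left.toAdd =
      g.left.toAdd - (((g.right : Kˣ) : K) - 1) • u := by
  simp only [MulAut.conj_apply, mul_left, inv_left, left_inl, right_inl, mul_right, inv_one,
    one_mul, map_one, MulAut.one_apply, MonoidHom.comp_apply, toAdd_mul, toAdd_inv, toAdd_ofAdd,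
    toAdd_scalarAct_apply, Subgroup.coe_subtype, sub_smul, one_smul, smul_neg]
  abel

theorem exists_conj_left_eq_one {g : ScalarSemidirectProduct K V C} (hg : g.right ≠ 1) :
    ∃ x, (MulAut.conj x g).left = 1 := by
  have hc : ((g.right : Kˣ) : K) - 1 ≠ 0 :=
    sub_ne_zero.2 fun h => hg (Subtype.ext (Units.ext h))
  refine ⟨inl (Multiplicative.ofAdd ((((g.right : Kˣ) : K) - 1)⁻¹ • g.left.toAdd)), ?_⟩
  rw [← toAdd_eq_zero, toAdd_left_conj_inl, smul_smul, mul_inv_cancel₀ hc, one_smul, sub_self]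

theorem finrank_add_one_le_card_of_left_eq_one {S : Finset (ScalarSemidirectProduct K V C)}
    (hS : Subgroup.closure (S : Set (ScalarSemidirectProduct K V C)) = ⊤) {s}
    (hsS : s ∈ S) (hs : s.left = 1) : Module.finrank K V + 1 ≤ S.card := by
  classical
  set T := (S.erase s).image fun t => t.left.toAdd
  have hT : Submodule.span K (T : Set V) = ⊤ := by
    rw [eq_top_iff, ← span_toAdd_left_eq_top_of_closure_eq_top hS, Submodule.span_le]
    rintro _ ⟨t, htS, rfl⟩
    rcases eq_or_ne t s with rfl | hts
    · simp [hs]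
    · exact Submodule.subset_span (Finset.mem_image_of_mem _ (Finset.mem_erase.2 ⟨hts, htS⟩))
  calc Module.finrank K V + 1 = Module.finrank K (Submodule.span K (T : Set V)) + 1 := by
        rw [hT, finrank_top]
    _ ≤ T.card + 1 := by gcongr; exact finrank_span_finset_le_card T
    _ ≤ (S.erase s).card + 1 := by gcongr; exact Finset.card_image_le
    _ = S.card := Finset.card_erase_add_one hsS

theorem finrank_add_one_le_card_of_closure_eq_top [Nontrivial C]
    {S : Finset (ScalarSemidirectProduct K V C)}
    (hS : Subgroup.closure (S : Set (ScalarSemidirectProduct K V C)) = ⊤) :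
    Module.finrank K V + 1 ≤ S.card := by
  obtain ⟨s, hsS, hs⟩ := exists_mem_right_ne_one_of_closure_eq_top hS
  obtain ⟨x, hx⟩ := exists_conj_left_eq_one hs
  let S' := S.map (MulAut.conj x).toEquiv.toEmbedding
  have hS' : Subgroup.closure (S' : Set (ScalarSemidirectProduct K V C)) = ⊤ := by
    rw [Finset.coe_map]
    change Subgroup.closure ((MulAut.conj x).toMonoidHom '' S) = ⊤
    rw [← MonoidHom.map_closure, hS, Subgroup.map_top_of_surjective _ (MulAut.conj x).surjective]
  simpa [S'] using finrank_add_one_le_card_of_left_eq_one hS'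
    (Finset.mem_map_of_mem _ hsS) hx

end ScalarSemidirectProduct

end

theorem Hyp.exists_card_eq_add_one_closure_eq_top {p n : ℕ} [Nontrivial (ZMod p)]
    {α : (ZMod p)ˣ} (hα : α ≠ 1) :
    ∃ S : Finset (Hyp p n (Subgroup.zpowers α)),
      S.card = n + 1 ∧ Subgroup.closure (S : Set (Hyp p n (Subgroup.zpowers α))) = ⊤ := by
  let a : Subgroup.zpowers α := ⟨α, Subgroup.mem_zpowers α⟩
  let e : Fin n → Hyp p n (Subgroup.zpowers α) :=
    fun i => inl (Multiplicative.ofAdd (Pi.basisFun (ZMod p) (Fin n) i))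
  have he : e.Injective :=
    inl_injective.comp (Multiplicative.ofAdd.injective.comp (Pi.basisFun _ _).injective)
  have ha : inr a ∉ Set.range e := by
    rintro ⟨i, hi⟩
    exact hα (congrArg (fun g => (g.right : (ZMod p)ˣ)) hi).symm
  refine ⟨Finset.univ.map ⟨Fin.cons (inr a) e, Fin.cons_injective_of_injective ha he⟩,
    by simp, ?_⟩
  have hgen := closure_image_inl_union_image_inr_eq_top
    (φ := (diagAct p n).comp (Subgroup.zpowers α).subtype)
    (Subgroup.closure_range_ofAdd_eq_top_of_span_zmod_eq_top (Pi.basisFun (ZMod p) (Fin n)).span_eq)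
    (Subgroup.closure_singleton_mk_self_eq_top α)
  rw [← Set.range_comp, Set.image_singleton, Set.union_singleton] at hgen
  rwa [Finset.coe_map, Finset.coe_univ, Set.image_univ, Function.Embedding.coeFn_mk,
    Fin.range_cons]

theorem stmt14_general (p n : ℕ) (hp : p.Prime) (α : (ZMod p)ˣ) (hα : α ≠ 1) :
    (∃ S : Finset (Hyp p n (Subgroup.zpowers α)),
        S.card = n + 1 ∧ Subgroup.closure (S : Set (Hyp p n (Subgroup.zpowers α))) = ⊤) ∧
      (∀ S : Finset (Hyp p n (Subgroup.zpowers α)),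
        Subgroup.closure (S : Set (Hyp p n (Subgroup.zpowers α))) = ⊤ →
          n + 1 ≤ S.card) := by
  have : Fact p.Prime := ⟨hp⟩
  have : Nontrivial (Subgroup.zpowers α) :=
    (Subgroup.nontrivial_iff_ne_bot _).2 (by rwa [Ne, Subgroup.zpowers_eq_bot])
  refine ⟨Hyp.exists_card_eq_add_one_closure_eq_top hα, fun S hS => ?_⟩
  have h := ScalarSemidirectProduct.finrank_add_one_le_card_of_closure_eq_top
    (K := ZMod p) (V := Fin n → ZMod p) hS
  rwa [Module.finrank_fin_fun] at h

/-- If `G = V_n ⋊_α C` is a `p`-hypersolvable group with `C = ⟨α⟩ ≠ 1`, then the minimal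
number of generators of `G` is `n + 1`: there is a generating set of size `n + 1` and no
smaller one. -/
theorem stmt14 (p n : ℕ) (hp : p.Prime) (hn : 0 < n) (α : (ZMod p)ˣ) (hα : α ≠ 1) :
    (∃ S : Finset (Hyp p n (Subgroup.zpowers α)),
        S.card = n + 1 ∧ Subgroup.closure (S : Set (Hyp p n (Subgroup.zpowers α))) = ⊤) ∧
      (∀ S : Finset (Hyp p n (Subgroup.zpowers α)),
        Subgroup.closure (S : Set (Hyp p n (Subgroup.zpowers α))) = ⊤ →
          n + 1 ≤ S.card) :=
  stmt14_general p n hp α hα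
end
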